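/- The support function of the set 𝕂 = {(ς, h, ςʳ) : ‖dev ς_s‖ + √(2/3)·h_s + β‖dev ςʳ‖ ≤ √(2/3)·σ_s + β·M for all s = 1,…,n}, evaluated at rates (ε̇ᵖ_s, κ̇_s, ε̇ʳ) with κ̇_s = √(2/3)·‖ε̇ᵖ_s‖ and ε̇ʳ = β·n̂·Σ_s ‖ε̇ᵖ_s‖ for a unit deviatoric direction n̂ with M = ‖σ_dev‖ and n̂ = σ_dev/‖σ_dev‖, equals Σ_s (√(2/3)·σ_s + β·M)·‖ε̇ᵖ_s‖. -/
import Mathlib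


open Matrix

/-- Frobenius inner product of two matrices. -/
noncomputable def fro {d : ℕ} (A B : Matrix (Fin d) (Fin d) ℝ) : ℝ :=
  ∑ i, ∑ j, A i j * B i j

/-- Frobenius norm. -/
noncomputable def froNorm {d : ℕ} (A : Matrix (Fin d) (Fin d) ℝ) : ℝ :=
  Real.sqrt (fro A A)

/-- Deviatoric part of a square matrix. -/
noncomputable def devPart {d : ℕ} (A : Matrix (Fin d) (Fin d) ℝ) :
    Matrix (Fin d) (Fin d) ℝ := A - (A.trace / d) • (1 : Matrix (Fin d) (Fin d) ℝ)

variable {d : ℕ}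

lemma fro_self_nonneg (A : Matrix (Fin d) (Fin d) ℝ) : 0 ≤ fro A A := by
  apply Finset.sum_nonneg; intro i _; apply Finset.sum_nonneg; intro j _; exact mul_self_nonneg _

lemma froNorm_nonneg (A : Matrix (Fin d) (Fin d) ℝ) : 0 ≤ froNorm A := Real.sqrt_nonneg _

lemma fro_smul_right (c : ℝ) (A B : Matrix (Fin d) (Fin d) ℝ) :
    fro A (c • B) = c * fro A B := by
  simp [fro, Finset.mul_sum, mul_comm, mul_left_comm]

lemma fro_smul_left (c : ℝ) (A B : Matrix (Fin d) (Fin d) ℝ) :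
    fro (c • A) B = c * fro A B := by
  simp [fro, Finset.mul_sum, mul_comm, mul_left_comm, mul_assoc]

lemma fro_sub_left (A B C : Matrix (Fin d) (Fin d) ℝ) :
    fro (A - B) C = fro A C - fro B C := by
  simp [fro, sub_mul, Finset.sum_sub_distrib]

lemma fro_one_left (B : Matrix (Fin d) (Fin d) ℝ) : fro 1 B = B.trace := by
  simp [fro, Matrix.one_apply, Matrix.trace, Matrix.diag]

lemma fro_dev_left (A B : Matrix (Fin d) (Fin d) ℝ) (h : B.trace = 0) :
    fro (devPart A) B = fro A B := by
  simp [devPart, fro_sub_left, fro_smul_left, fro_one_left, h]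

lemma fro_cauchy (A B : Matrix (Fin d) (Fin d) ℝ) :
    fro A B ≤ froNorm A * froNorm B := by
  have h1 : ∀ C D : Matrix (Fin d) (Fin d) ℝ,
      fro C D = ∑ p : Fin d × Fin d, C p.1 p.2 * D p.1 p.2 := by
    intro C D; rw [fro, ← Finset.sum_product']; rfl
  rw [froNorm, froNorm, h1]
  have := Real.sum_mul_le_sqrt_mul_sqrt Finset.univ
    (fun p : Fin d × Fin d => A p.1 p.2) (fun p => B p.1 p.2)
  simpa [h1, sq] using this

lemma froNorm_smul (c : ℝ) (A : Matrix (Fin d) (Fin d) ℝ) :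
    froNorm (c • A) = |c| * froNorm A := by
  rw [froNorm, fro_smul_left, fro_smul_right, ← mul_assoc, ← sq, Real.sqrt_mul (sq_nonneg c),
    Real.sqrt_sq_eq_abs]; rfl

lemma fro_self_pos (A : Matrix (Fin d) (Fin d) ℝ) (h : A ≠ 0) : 0 < fro A A := by
  rcases lt_or_eq_of_le (fro_self_nonneg A) with h' | h'
  · exact h'
  · exfalso; apply h
    ext i j
    have hz : ∀ i ∈ Finset.univ, (0:ℝ) ≤ ∑ j, A i j * A i j := fun i _ =>
      Finset.sum_nonneg fun j _ => mul_self_nonneg _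
    have := (Finset.sum_eq_zero_iff_of_nonneg hz).mp h'.symm i (Finset.mem_univ i)
    have hz2 : ∀ j ∈ Finset.univ, (0:ℝ) ≤ A i j * A i j := fun j _ => mul_self_nonneg _
    have := (Finset.sum_eq_zero_iff_of_nonneg hz2).mp this j (Finset.mem_univ j)
    simpa [mul_self_eq_zero] using this

lemma froNorm_pos (A : Matrix (Fin d) (Fin d) ℝ) (h : A ≠ 0) : 0 < froNorm A :=
  Real.sqrt_pos.mpr (fro_self_pos A h)

/-- The state-dependent dissipation potential of the cyclic plasticity model with
ratcheting: the support function of the admissible set 𝕂(σ) evaluated at rates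
satisfying the hardening law `κ̇_s = √(2/3)‖ε̇ᵖ_s‖` and the ratcheting law
`ε̇ʳ = β n̂ Σ_s ‖ε̇ᵖ_s‖` equals `Σ_s (√(2/3)σ_s + β‖σ_dev‖)‖ε̇ᵖ_s‖`. -/
theorem dissipation_support_function (d n : ℕ) (hd : 0 < d)
    (β : ℝ) (hβ : β ∈ Set.Icc (0:ℝ) 1)
    (σp : Fin n → ℝ) (hσp : ∀ s, 0 < σp s)
    (σdev : Matrix (Fin d) (Fin d) ℝ) (hσsym : σdevᵀ = σdev)
    (hσtr : σdev.trace = 0) (hσne : σdev ≠ 0)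
    (εpdot : Fin n → Matrix (Fin d) (Fin d) ℝ)
    (hεsym : ∀ s, (εpdot s)ᵀ = εpdot s) (hεtr : ∀ s, (εpdot s).trace = 0)
    (M : ℝ) (hM : M = froNorm σdev)
    (nhat : Matrix (Fin d) (Fin d) ℝ) (hnhat : nhat = (froNorm σdev)⁻¹ • σdev)
    (κdot : Fin n → ℝ) (hκdot : ∀ s, κdot s = Real.sqrt (2/3) * froNorm (εpdot s))
    (εrdot : Matrix (Fin d) (Fin d) ℝ)
    (hεrdot : εrdot = (β * ∑ s, froNorm (εpdot s)) • nhat) :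
    sSup {v : ℝ | ∃ ς : Fin n → Matrix (Fin d) (Fin d) ℝ, ∃ h : Fin n → ℝ,
        ∃ ςr : Matrix (Fin d) (Fin d) ℝ,
        (∀ s, froNorm (devPart (ς s)) + Real.sqrt (2/3) * h s + β * froNorm (devPart ςr)
            ≤ Real.sqrt (2/3) * σp s + β * M) ∧
        v = (∑ s, fro (ς s) (εpdot s)) + (∑ s, h s * κdot s) + fro ςr εrdot}
      = ∑ s, (Real.sqrt (2/3) * σp s + β * M) * froNorm (εpdot s) := by
  have hβ0 : 0 ≤ β := hβ.1
  have hσpos : 0 < froNorm σdev := froNorm_pos σdev hσne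
  have hnhat_norm : froNorm nhat = 1 := by
    rw [hnhat, froNorm_smul, abs_of_nonneg (inv_nonneg.mpr hσpos.le),
      inv_mul_cancel₀ hσpos.ne']
  have hnhat_tr : nhat.trace = 0 := by
    rw [hnhat]; simp [Matrix.trace_smul, hσtr]
  have hfro_nn : fro nhat nhat = 1 := by
    have : froNorm nhat ^ 2 = fro nhat nhat := by
      rw [froNorm, Real.sq_sqrt (fro_self_nonneg _)]
    rw [← this, hnhat_norm]; norm_num
  have hsum_nn : 0 ≤ ∑ s, froNorm (εpdot s) :=
    Finset.sum_nonneg fun s _ => froNorm_nonneg _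
  have hdev0 : devPart (0 : Matrix (Fin d) (Fin d) ℝ) = 0 := by
    simp [devPart]
  have hfro00 : froNorm (0 : Matrix (Fin d) (Fin d) ℝ) = 0 := by
    simp [froNorm, fro]
  apply IsGreatest.csSup_eq
  constructor
  · -- membership: witness ς = 0, h = σp, ςr = M • nhat
    refine ⟨fun _ => 0, σp, M • nhat, ?_, ?_⟩
    · intro s
      have htr : (M • nhat).trace = 0 := by simp [Matrix.trace_smul, hnhat_tr]
      have hdev : devPart (M • nhat) = M • nhat := by
        simp [devPart, htr]
      rw [hdev0, hfro00, hdev, froNorm_smul, hnhat_norm,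
        abs_of_nonneg (hM ▸ hσpos.le)]
      ring_nf
      exact le_refl _
    · have h1 : ∀ s : Fin n, fro (0 : Matrix (Fin d) (Fin d) ℝ) (εpdot s) = 0 := by
        intro s; simp [fro]
      have h2 : fro (M • nhat) εrdot = β * M * ∑ s, froNorm (εpdot s) := by
        rw [hεrdot, fro_smul_left, fro_smul_right, hfro_nn]; ring
      rw [Finset.sum_congr rfl (fun s _ => h1 s), h2]
      simp only [hκdot, Finset.sum_const, smul_zero, Finset.smul_sum]
      rw [zero_add, Finset.mul_sum, ← Finset.sum_add_distrib]
      apply Finset.sum_congr rfl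
      intro s _; ring
  · -- upper bound
    rintro v ⟨ς, h, ςr, hcon, rfl⟩
    have hr : fro ςr εrdot ≤ ∑ s, β * froNorm (devPart ςr) * froNorm (εpdot s) := by
      rw [hεrdot, fro_smul_right]
      have h1 : fro ςr nhat ≤ froNorm (devPart ςr) := by
        calc fro ςr nhat = fro (devPart ςr) nhat := (fro_dev_left ςr nhat hnhat_tr).symm
          _ ≤ froNorm (devPart ςr) * froNorm nhat := fro_cauchy _ _
          _ = froNorm (devPart ςr) := by rw [hnhat_norm, mul_one]
      calc β * (∑ s, froNorm (εpdot s)) * fro ςr nhat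
          ≤ β * (∑ s, froNorm (εpdot s)) * froNorm (devPart ςr) :=
            mul_le_mul_of_nonneg_left h1 (mul_nonneg hβ0 hsum_nn)
        _ = ∑ s, β * froNorm (devPart ςr) * froNorm (εpdot s) := by
            simp only [Finset.mul_sum, Finset.sum_mul]
            apply Finset.sum_congr rfl; intro s _; ring
    calc (∑ s, fro (ς s) (εpdot s)) + (∑ s, h s * κdot s) + fro ςr εrdot
        ≤ (∑ s, fro (ς s) (εpdot s)) + (∑ s, h s * κdot s)
          + ∑ s, β * froNorm (devPart ςr) * froNorm (εpdot s) := by linarith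
      _ = ∑ s, (fro (ς s) (εpdot s) + h s * κdot s
            + β * froNorm (devPart ςr) * froNorm (εpdot s)) := by
          rw [← Finset.sum_add_distrib, ← Finset.sum_add_distrib]
      _ ≤ ∑ s, (Real.sqrt (2/3) * σp s + β * M) * froNorm (εpdot s) := by
          apply Finset.sum_le_sum
          intro s _
          have hf : fro (ς s) (εpdot s) ≤ froNorm (devPart (ς s)) * froNorm (εpdot s) := by
            calc fro (ς s) (εpdot s) = fro (devPart (ς s)) (εpdot s) :=
                  (fro_dev_left _ _ (hεtr s)).symm
              _ ≤ froNorm (devPart (ς s)) * froNorm (εpdot s) := fro_cauchy _ _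
          have hk : h s * κdot s = (Real.sqrt (2/3) * h s) * froNorm (εpdot s) := by
            rw [hκdot]; ring
          calc fro (ς s) (εpdot s) + h s * κdot s
                + β * froNorm (devPart ςr) * froNorm (εpdot s)
              ≤ (froNorm (devPart (ς s)) + Real.sqrt (2/3) * h s
                  + β * froNorm (devPart ςr)) * froNorm (εpdot s) := by
                rw [hk]; nlinarith [froNorm_nonneg (εpdot s)]
            _ ≤ (Real.sqrt (2/3) * σp s + β * M) * froNorm (εpdot s) :=
                mul_le_mul_of_nonneg_right (hcon s) (froNorm_nonneg _)
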